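/- Let T₁ and T₂ be linear subspaces of real p×p matrices of the same dimension with ρ(T₁,T₂) < 1. Then ξ(T₂) ≤ (ξ(T₁) + ρ(T₁,T₂)) / (1 − ρ(T₁,T₂)). -/

import Mathlib

open Matrix MeasureTheory
open scoped Classical

noncomputable section

namespace LVGGM

variable {p h : ℕ}

/-- Spectral norm (largest singular value) of a real square matrix. -/
def specNorm (M : Matrix (Fin p) (Fin p) ℝ) : ℝ :=
  ‖Matrix.toEuclideanCLM (𝕜 := ℝ) M‖

/-- Entrywise max norm `‖M‖_∞`. -/
def maxNorm (M : Matrix (Fin p) (Fin p) ℝ) : ℝ :=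
  ⨆ i, ⨆ j, |M i j|

/-- Entrywise ℓ₁ norm `‖M‖₁`. -/
def l1Norm (M : Matrix (Fin p) (Fin p) ℝ) : ℝ :=
  ∑ i, ∑ j, |M i j|

/-- The matrix of the orthogonal projection of ℝ^p onto the column space of `M`. -/
def colProj (M : Matrix (Fin p) (Fin p) ℝ) : Matrix (Fin p) (Fin p) ℝ :=
  LinearMap.toMatrix (EuclideanSpace.basisFun (Fin p) ℝ).toBasis
    (EuclideanSpace.basisFun (Fin p) ℝ).toBasis
    ((LinearMap.range (Matrix.toEuclideanLin M)).subtype ∘ₗ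
      (Submodule.orthogonalProjectionOnto (LinearMap.range (Matrix.toEuclideanLin M))).toLinearMap)

/-- Singular values of a matrix, as square roots of eigenvalues of `Mᴴ M`. -/
def singVals (M : Matrix (Fin p) (Fin p) ℝ) (i : Fin p) : ℝ :=
  Real.sqrt ((Matrix.posSemidef_conjTranspose_mul_self M).1.eigenvalues i)

/-! ### Sparse tangent spaces -/

/-- Tangent space to the variety of sparse matrices at `M₀`. -/
def OmegaSet (M₀ : Matrix (Fin p) (Fin p) ℝ) : Set (Matrix (Fin p) (Fin p) ℝ) :=
  {N | ∀ i j, M₀ i j = 0 → N i j = 0}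

/-- Orthogonal projection onto `OmegaSet M₀`. -/
def projOmega (M₀ N : Matrix (Fin p) (Fin p) ℝ) : Matrix (Fin p) (Fin p) ℝ :=
  Matrix.of fun i j => if M₀ i j = 0 then 0 else N i j

/-- Orthogonal projection onto the orthogonal complement of `OmegaSet M₀`. -/
def projOmegaPerp (M₀ N : Matrix (Fin p) (Fin p) ℝ) : Matrix (Fin p) (Fin p) ℝ :=
  Matrix.of fun i j => if M₀ i j = 0 then N i j else 0

/-- `μ(Ω(M₀))`: max spectral norm over the `‖·‖_∞`-unit ball of `Ω(M₀)`. -/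
def muOmega (M₀ : Matrix (Fin p) (Fin p) ℝ) : ℝ :=
  ⨆ N : {N : Matrix (Fin p) (Fin p) ℝ // N ∈ OmegaSet M₀ ∧ maxNorm N ≤ 1}, specNorm N.1

/-! ### Low-rank tangent spaces (symmetric version) -/

/-- `𝒫_{T(M)}` for symmetric `M`: `N ↦ P N + N P − P N P` with `P` the column-space projector. -/
def projTsym (M N : Matrix (Fin p) (Fin p) ℝ) : Matrix (Fin p) (Fin p) ℝ :=
  colProj M * N + N * colProj M - colProj M * N * colProj M

/-- `𝒫_{T(M)^⊥}` for symmetric `M`: `N ↦ (I−P) N (I−P)`. -/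
def projTsymPerp (M N : Matrix (Fin p) (Fin p) ℝ) : Matrix (Fin p) (Fin p) ℝ :=
  (1 - colProj M) * N * (1 - colProj M)

/-- Tangent space to the variety of symmetric low-rank matrices at symmetric `M`. -/
def TsetSym (M : Matrix (Fin p) (Fin p) ℝ) : Set (Matrix (Fin p) (Fin p) ℝ) :=
  {N | N.IsHermitian ∧ projTsymPerp M N = 0}

/-- `ξ(T(M))` (symmetric version). -/
def xiT (M : Matrix (Fin p) (Fin p) ℝ) : ℝ :=
  ⨆ N : {N : Matrix (Fin p) (Fin p) ℝ // N ∈ TsetSym M ∧ specNorm N ≤ 1}, maxNorm N.1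

/-- `ρ(T(M₁), T(M₂))` (symmetric version). -/
def rhoSym (M₁ M₂ : Matrix (Fin p) (Fin p) ℝ) : ℝ :=
  ⨆ N : {N : Matrix (Fin p) (Fin p) ℝ // specNorm N ≤ 1},
    specNorm (projTsym M₁ N.1 - projTsym M₂ N.1)

/-! ### Low-rank tangent spaces (general version) -/

/-- `𝒫_{T(M)}` for general `M`: `N ↦ P_U N + N P_V − P_U N P_V`. -/
def projTgen (M N : Matrix (Fin p) (Fin p) ℝ) : Matrix (Fin p) (Fin p) ℝ :=
  colProj M * N + N * colProj Mᵀ - colProj M * N * colProj Mᵀ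

/-- `𝒫_{T(M)^⊥}` for general `M`. -/
def projTgenPerp (M N : Matrix (Fin p) (Fin p) ℝ) : Matrix (Fin p) (Fin p) ℝ :=
  (1 - colProj M) * N * (1 - colProj Mᵀ)

/-- Tangent space to the variety of low-rank matrices at a general matrix `M`. -/
def TsetGen (M : Matrix (Fin p) (Fin p) ℝ) : Set (Matrix (Fin p) (Fin p) ℝ) :=
  {N | projTgenPerp M N = 0}

/-- `ξ(T(M))` (general version). -/
def xiGen (M : Matrix (Fin p) (Fin p) ℝ) : ℝ :=
  ⨆ N : {N : Matrix (Fin p) (Fin p) ℝ // N ∈ TsetGen M ∧ specNorm N ≤ 1}, maxNorm N.1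

/-- Euclidean norm of the `i`-th column of `P`, i.e. `‖P e_i‖`. -/
def colEucNorm (P : Matrix (Fin p) (Fin p) ℝ) (i : Fin p) : ℝ :=
  Real.sqrt (∑ j, (P j i) ^ 2)

/-- Incoherence `inc(M)` of the row/column spaces of `M`. -/
def inc (M : Matrix (Fin p) (Fin p) ℝ) : ℝ :=
  max (⨆ i, colEucNorm (colProj M) i) (⨆ i, colEucNorm (colProj Mᵀ) i)

/-! ### Orthogonal projections onto arbitrary subspaces of matrices -/

/-- Matrices as vectors in the Euclidean space of entries (trace inner product). -/
def toELin : Matrix (Fin p) (Fin p) ℝ →ₗ[ℝ] EuclideanSpace ℝ (Fin p × Fin p) where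
  toFun M := WithLp.toLp 2 (fun q => M q.1 q.2)
  map_add' _ _ := rfl
  map_smul' _ _ := rfl

/-- Orthogonal projection (trace inner product) onto a subspace of matrices. -/
def matProj (T : Submodule ℝ (Matrix (Fin p) (Fin p) ℝ)) (N : Matrix (Fin p) (Fin p) ℝ) :
    Matrix (Fin p) (Fin p) ℝ :=
  Matrix.of fun i j => (Submodule.orthogonalProjectionOnto (T.map toELin) (toELin N) : EuclideanSpace ℝ (Fin p × Fin p)) (i, j)

/-- `ρ(T₁,T₂)` for arbitrary subspaces of matrices. -/
def rhoSub (T₁ T₂ : Submodule ℝ (Matrix (Fin p) (Fin p) ℝ)) : ℝ :=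
  ⨆ N : {N : Matrix (Fin p) (Fin p) ℝ // specNorm N ≤ 1},
    specNorm (matProj T₁ N.1 - matProj T₂ N.1)

/-- `ξ(T)` for an arbitrary subspace of matrices. -/
def xiSub (T : Submodule ℝ (Matrix (Fin p) (Fin p) ℝ)) : ℝ :=
  ⨆ N : {N : Matrix (Fin p) (Fin p) ℝ // N ∈ T ∧ specNorm N ≤ 1}, maxNorm N.1

/-! ### The dual norm g_γ -/

/-- `g_γ(S,L) = max(‖S‖_∞/γ, ‖L‖₂)`. -/
def gNorm (γ : ℝ) (S L : Matrix (Fin p) (Fin p) ℝ) : ℝ :=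
  max (maxNorm S / γ) (specNorm L)

/-- `g_γ(𝒜†(M)) = max(‖M‖_∞/γ, ‖M‖₂)`. -/
def gA (γ : ℝ) (M : Matrix (Fin p) (Fin p) ℝ) : ℝ :=
  max (maxNorm M / γ) (specNorm M)

/-! ### Latent-variable Fisher information setup -/

/-- `S* = K*_O`. -/
def Sstar (K : Matrix (Fin p ⊕ Fin h) (Fin p ⊕ Fin h) ℝ) : Matrix (Fin p) (Fin p) ℝ :=
  K.toBlocks₁₁

/-- `L* = K*_{O,H} (K*_H)⁻¹ K*_{H,O}`. -/
def Lstar (K : Matrix (Fin p ⊕ Fin h) (Fin p ⊕ Fin h) ℝ) : Matrix (Fin p) (Fin p) ℝ :=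
  K.toBlocks₁₂ * (K.toBlocks₂₂)⁻¹ * K.toBlocks₂₁

/-- `K̃*_O = S* − L*` (Schur complement). -/
def KtildeO (K : Matrix (Fin p ⊕ Fin h) (Fin p ⊕ Fin h) ℝ) : Matrix (Fin p) (Fin p) ℝ :=
  Sstar K - Lstar K

/-- `Σ*_O = (K̃*_O)⁻¹`. -/
def SigmaO (K : Matrix (Fin p ⊕ Fin h) (Fin p ⊕ Fin h) ℝ) : Matrix (Fin p) (Fin p) ℝ :=
  (KtildeO K)⁻¹

/-- `ψ = ‖Σ*_O‖₂`. -/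
def psi (K : Matrix (Fin p ⊕ Fin h) (Fin p ⊕ Fin h) ℝ) : ℝ :=
  specNorm (SigmaO K)

/-- Fisher information operator `ℐ*(M) = Σ*_O M Σ*_O`. -/
def Istar (K : Matrix (Fin p ⊕ Fin h) (Fin p ⊕ Fin h) ℝ) (M : Matrix (Fin p) (Fin p) ℝ) :
    Matrix (Fin p) (Fin p) ℝ :=
  SigmaO K * M * SigmaO K

/-- A nearby tangent space: `T' = T(M')` for a symmetric `M'` with the same rank as `Lst`
and `ρ(T',T(Lst)) ≤ ξ(T(Lst))/2`. -/
def Nearby (Lst M' : Matrix (Fin p) (Fin p) ℝ) : Prop :=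
  M'.IsHermitian ∧ M'.rank = Lst.rank ∧ rhoSym M' Lst ≤ xiT Lst / 2

/-- `α_Ω`. -/
def alphaOmega (K : Matrix (Fin p ⊕ Fin h) (Fin p ⊕ Fin h) ℝ) : ℝ :=
  ⨅ M : {M : Matrix (Fin p) (Fin p) ℝ // M ∈ OmegaSet (Sstar K) ∧ maxNorm M = 1},
    maxNorm (projOmega (Sstar K) (Istar K (projOmega (Sstar K) M.1)))

/-- `δ_Ω`. -/
def deltaOmega (K : Matrix (Fin p ⊕ Fin h) (Fin p ⊕ Fin h) ℝ) : ℝ :=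
  ⨆ M : {M : Matrix (Fin p) (Fin p) ℝ // M ∈ OmegaSet (Sstar K) ∧ maxNorm M = 1},
    maxNorm (projOmegaPerp (Sstar K) (Istar K (projOmega (Sstar K) M.1)))

/-- `β_Ω`. -/
def betaOmega (K : Matrix (Fin p ⊕ Fin h) (Fin p ⊕ Fin h) ℝ) : ℝ :=
  ⨆ M : {M : Matrix (Fin p) (Fin p) ℝ // M ∈ OmegaSet (Sstar K) ∧ specNorm M = 1},
    specNorm (Istar K M.1)

/-- `α_T`. -/
def alphaTC (K : Matrix (Fin p ⊕ Fin h) (Fin p ⊕ Fin h) ℝ) : ℝ :=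
  ⨅ x : {x : Matrix (Fin p) (Fin p) ℝ × Matrix (Fin p) (Fin p) ℝ //
      Nearby (Lstar K) x.1 ∧ x.2 ∈ TsetSym x.1 ∧ specNorm x.2 = 1},
    specNorm (projTsym x.1.1 (Istar K (projTsym x.1.1 x.1.2)))

/-- `δ_T`. -/
def deltaTC (K : Matrix (Fin p ⊕ Fin h) (Fin p ⊕ Fin h) ℝ) : ℝ :=
  ⨆ x : {x : Matrix (Fin p) (Fin p) ℝ × Matrix (Fin p) (Fin p) ℝ //
      Nearby (Lstar K) x.1 ∧ x.2 ∈ TsetSym x.1 ∧ specNorm x.2 = 1},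
    specNorm (projTsymPerp x.1.1 (Istar K (projTsym x.1.1 x.1.2)))

/-- `β_T`. -/
def betaTC (K : Matrix (Fin p ⊕ Fin h) (Fin p ⊕ Fin h) ℝ) : ℝ :=
  ⨆ x : {x : Matrix (Fin p) (Fin p) ℝ × Matrix (Fin p) (Fin p) ℝ //
      Nearby (Lstar K) x.1 ∧ x.2 ∈ TsetSym x.1 ∧ maxNorm x.2 = 1},
    maxNorm (Istar K x.1.2)

/-- `α = min(α_Ω, α_T)`. -/
def alphaC (K : Matrix (Fin p ⊕ Fin h) (Fin p ⊕ Fin h) ℝ) : ℝ :=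
  min (alphaOmega K) (alphaTC K)

/-- `δ = max(δ_Ω, δ_T)`. -/
def deltaC (K : Matrix (Fin p ⊕ Fin h) (Fin p ⊕ Fin h) ℝ) : ℝ :=
  max (deltaOmega K) (deltaTC K)

/-- `β = max(β_Ω, β_T)`. -/
def betaC (K : Matrix (Fin p ⊕ Fin h) (Fin p ⊕ Fin h) ℝ) : ℝ :=
  max (betaOmega K) (betaTC K)

/-! ### Probability: iid Gaussian samples and sample covariance -/

/-- The positive-semidefinite square root (the definition of `Matrix.PosSemidef.sqrt` in the
older Mathlib, which no longer provides it). -/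
def _root_.Matrix.PosSemidef.sqrt {n : Type*} [Fintype n] {A : Matrix n n ℝ}
    (hA : A.PosSemidef) : Matrix n n ℝ :=
  hA.1.eigenvectorUnitary.1 * diagonal ((↑) ∘ (√·) ∘ hA.1.eigenvalues) *
    (star hA.1.eigenvectorUnitary : Matrix n n ℝ)

/-- The joint law of `n` i.i.d. samples from `N(0, S)` on `ℝ^p`, realized by pushing forward
i.i.d. standard Gaussians through the positive-semidefinite square root of `S`. -/
def iidGaussian (n p : ℕ) (S : Matrix (Fin p) (Fin p) ℝ) : Measure (Fin n → Fin p → ℝ) :=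
  if hS : S.PosSemidef then
    (Measure.pi fun _ : Fin n => Measure.pi fun _ : Fin p =>
        ProbabilityTheory.gaussianReal 0 1).map
      (fun Z => fun i => hS.sqrt.mulVec (Z i))
  else 0

/-- Sample covariance matrix of samples `X 1, …, X n`. -/
def sampleCov {p n : ℕ} (X : Fin n → Fin p → ℝ) : Matrix (Fin p) (Fin p) ℝ :=
  (n : ℝ)⁻¹ • ∑ i, Matrix.vecMulVec (X i) (X i)

/-! ### Optimization programs -/

/-- Nuclear norm `‖M‖_*` (sum of singular values). -/
def nuclearNorm (M : Matrix (Fin p) (Fin p) ℝ) : ℝ :=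
  ((Matrix.posSemidef_conjTranspose_mul_self M).sqrt).trace

/-- Objective of the program (sdp1): `tr((S−L)Σ) − log det(S−L) + λ(γ‖S‖₁ + tr(L))`. -/
def objSDP1 (Sig : Matrix (Fin p) (Fin p) ℝ) (lam gam : ℝ)
    (S L : Matrix (Fin p) (Fin p) ℝ) : ℝ :=
  ((S - L) * Sig).trace - Real.log (S - L).det + lam * (gam * l1Norm S + L.trace)

/-- Feasibility for (sdp1): symmetric `S, L`, `S − L ≻ 0`, `L ⪰ 0`. -/
def FeasSDP1 (S L : Matrix (Fin p) (Fin p) ℝ) : Prop :=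
  S.IsHermitian ∧ L.IsHermitian ∧ (S - L).PosDef ∧ L.PosSemidef

/-- `(S,L)` is an optimum of the program (sdp1). -/
def IsOptSDP1 (Sig : Matrix (Fin p) (Fin p) ℝ) (lam gam : ℝ)
    (S L : Matrix (Fin p) (Fin p) ℝ) : Prop :=
  FeasSDP1 S L ∧ ∀ S' L', FeasSDP1 S' L' →
    objSDP1 Sig lam gam S L ≤ objSDP1 Sig lam gam S' L'

/-- Objective with the nuclear norm: `tr((S−L)Σ) − log det(S−L) + λ(γ‖S‖₁ + ‖L‖_*)`. -/
def objNuc (Sig : Matrix (Fin p) (Fin p) ℝ) (lam gam : ℝ)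
    (S L : Matrix (Fin p) (Fin p) ℝ) : ℝ :=
  ((S - L) * Sig).trace - Real.log (S - L).det + lam * (gam * l1Norm S + nuclearNorm L)

/-- Feasibility for the tangent-space constrained program: symmetric, `S ∈ Ω(Sst)`,
`L ∈ T(M')`, `S − L ≻ 0`. -/
def FeasTS (Sst M' : Matrix (Fin p) (Fin p) ℝ) (S L : Matrix (Fin p) (Fin p) ℝ) : Prop :=
  S.IsHermitian ∧ S ∈ OmegaSet Sst ∧ L ∈ TsetSym M' ∧ (S - L).PosDef

/-- Optimality for the tangent-space constrained program. -/
def IsOptTS (Sst M' Sig : Matrix (Fin p) (Fin p) ℝ) (lam gam : ℝ)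
    (S L : Matrix (Fin p) (Fin p) ℝ) : Prop :=
  FeasTS Sst M' S L ∧ ∀ S' L', FeasTS Sst M' S' L' →
    objNuc Sig lam gam S L ≤ objNuc Sig lam gam S' L'

/-- Feasibility for the unconstrained nuclear-norm program: symmetric, `S − L ≻ 0`. -/
def FeasSy (S L : Matrix (Fin p) (Fin p) ℝ) : Prop :=
  S.IsHermitian ∧ L.IsHermitian ∧ (S - L).PosDef

/-- Optimality for the unconstrained nuclear-norm program. -/
def IsOptSy (Sig : Matrix (Fin p) (Fin p) ℝ) (lam gam : ℝ)
    (S L : Matrix (Fin p) (Fin p) ℝ) : Prop :=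
  FeasSy S L ∧ ∀ S' L', FeasSy S' L' →
    objNuc Sig lam gam S L ≤ objNuc Sig lam gam S' L'

/-! ### Spectral projectors and inertia -/

/-- Orthogonal projection onto the direct sum of the eigenspaces of a symmetric matrix `A`
corresponding to eigenvalues of magnitude less than `η`. -/
def spectralProjLT (A : Matrix (Fin p) (Fin p) ℝ) (η : ℝ) : Matrix (Fin p) (Fin p) ℝ :=
  if hA : A.IsHermitian then
    ∑ i ∈ Finset.univ.filter (fun i => |hA.eigenvalues i| < η),
      Matrix.vecMulVec (fun j => hA.eigenvectorBasis i j) (fun j => hA.eigenvectorBasis i j)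
  else 0

/-- `t` is an eigenvalue of `A`. -/
def hasEigval (A : Matrix (Fin p) (Fin p) ℝ) (t : ℝ) : Prop :=
  ∃ v : Fin p → ℝ, v ≠ 0 ∧ A.mulVec v = t • v

/-- Inertia (numbers of positive, negative, and zero eigenvalues) of a symmetric matrix. -/
def inertia (M : Matrix (Fin p) (Fin p) ℝ) : ℕ × ℕ × ℕ :=
  if hM : M.IsHermitian then
    ((Finset.univ.filter fun i => 0 < hM.eigenvalues i).card,
     (Finset.univ.filter fun i => hM.eigenvalues i < 0).card,
     (Finset.univ.filter fun i => hM.eigenvalues i = 0).card)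
  else (0, 0, 0)

end LVGGM

/-! For `N ∈ T₂` with `‖N‖₂ ≤ 1`, the projection `P = 𝒫_{T₁} N` lies in `T₁` and
`‖P - N‖₂ = ‖(𝒫_{T₁} - 𝒫_{T₂}) N‖₂ ≤ ρ`, so `‖P‖₂ ≤ 1 + ρ`. Since entries are bounded by the
spectral norm, `‖N‖∞ ≤ ‖P‖∞ + ‖N - P‖₂ ≤ ξ(T₁)(1 + ρ) + ρ`, and for `0 ≤ ρ < 1` this is at most
`(ξ(T₁) + ρ)/(1 - ρ)`. -/

open scoped Matrix.Norms.L2Operator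

theorem Matrix.norm_apply_le_l2_opNorm {𝕜 m n : Type*} [RCLike 𝕜] [Fintype m] [Fintype n]
    [DecidableEq n] (A : Matrix m n 𝕜) (i : m) (j : n) : ‖A i j‖ ≤ ‖A‖ := by
  have hcol := A.l2_opNorm_mulVec (EuclideanSpace.single j 1)
  rw [PiLp.norm_single, norm_one, mul_one] at hcol
  refine le_trans (le_of_eq ?_) ((PiLp.norm_apply_le _ i).trans hcol)
  simp

namespace LVGGM

variable {p : ℕ}

/- Under the L2 operator norm instance, `specNorm M` and `‖M‖` are definitionally equal; the
lemmas below state spectral-norm bounds as `‖M‖` and use them for `specNorm` freely. -/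

theorem abs_apply_le_maxNorm (M : Matrix (Fin p) (Fin p) ℝ) (i j : Fin p) :
    |M i j| ≤ maxNorm M :=
  (le_ciSup (Finite.bddAbove_range fun j => |M i j|) j).trans
    (le_ciSup (Finite.bddAbove_range fun i => ⨆ j, |M i j|) i)

theorem maxNorm_le {M : Matrix (Fin p) (Fin p) ℝ} {a : ℝ} (ha : 0 ≤ a)
    (h : ∀ i j, |M i j| ≤ a) : maxNorm M ≤ a :=
  Real.iSup_le (fun i => Real.iSup_le (h i) ha) ha

theorem maxNorm_nonneg (M : Matrix (Fin p) (Fin p) ℝ) : 0 ≤ maxNorm M :=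
  Real.iSup_nonneg fun _ => Real.iSup_nonneg fun _ => abs_nonneg _

theorem maxNorm_add_le (M N : Matrix (Fin p) (Fin p) ℝ) :
    maxNorm (M + N) ≤ maxNorm M + maxNorm N :=
  maxNorm_le (add_nonneg (maxNorm_nonneg M) (maxNorm_nonneg N)) fun i j =>
    (abs_add_le _ _).trans (add_le_add (abs_apply_le_maxNorm M i j) (abs_apply_le_maxNorm N i j))

theorem maxNorm_le_norm (M : Matrix (Fin p) (Fin p) ℝ) : maxNorm M ≤ ‖M‖ :=
  maxNorm_le (norm_nonneg M) fun i j => M.norm_apply_le_l2_opNorm i j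

theorem le_xiSub {T : Submodule ℝ (Matrix (Fin p) (Fin p) ℝ)} {N : Matrix (Fin p) (Fin p) ℝ}
    (hN : N ∈ T) (h1 : ‖N‖ ≤ 1) : maxNorm N ≤ xiSub T := by
  refine le_ciSup (f := fun N : {N // N ∈ T ∧ specNorm N ≤ 1} => maxNorm N.1) ⟨1, ?_⟩ ⟨N, hN, h1⟩
  rintro _ ⟨N', rfl⟩
  exact (maxNorm_le_norm _).trans N'.2.2

theorem xiSub_nonneg (T : Submodule ℝ (Matrix (Fin p) (Fin p) ℝ)) : 0 ≤ xiSub T :=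
  Real.iSup_nonneg fun _ => maxNorm_nonneg _

theorem maxNorm_le_xiSub_mul_norm {T : Submodule ℝ (Matrix (Fin p) (Fin p) ℝ)}
    {M : Matrix (Fin p) (Fin p) ℝ} (hM : M ∈ T) : maxNorm M ≤ xiSub T * ‖M‖ := by
  refine maxNorm_le (mul_nonneg (xiSub_nonneg T) (norm_nonneg M)) fun i j => ?_
  rcases (norm_nonneg M).eq_or_lt with h0 | hpos
  · simpa [← h0] using M.norm_apply_le_l2_opNorm i j
  have hunit : ‖‖M‖⁻¹ • M‖ ≤ 1 := by
    rw [norm_smul, norm_inv, norm_norm, inv_mul_cancel₀ hpos.ne']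
  calc |M i j| = ‖M‖ * |(‖M‖⁻¹ • M) i j| := by
        rw [Matrix.smul_apply, smul_eq_mul, abs_mul, abs_inv, abs_norm, ← mul_assoc,
          mul_inv_cancel₀ hpos.ne', one_mul]
    _ ≤ ‖M‖ * xiSub T := by
        gcongr
        exact (abs_apply_le_maxNorm _ i j).trans (le_xiSub (T.smul_mem _ hM) hunit)
    _ = xiSub T * ‖M‖ := mul_comm _ _

theorem toELin_injective : Function.Injective (toELin (p := p)) :=
  fun _ _ h => Matrix.ext fun i j => congrArg (· (i, j)) h

theorem toELin_matProj (T : Submodule ℝ (Matrix (Fin p) (Fin p) ℝ)) (N : Matrix (Fin p) (Fin p) ℝ) :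
    toELin (matProj T N) = (T.map toELin).starProjection (toELin N) :=
  rfl

theorem matProj_mem (T : Submodule ℝ (Matrix (Fin p) (Fin p) ℝ)) (N : Matrix (Fin p) (Fin p) ℝ) :
    matProj T N ∈ T := by
  obtain ⟨M, hM, hMN⟩ : toELin (matProj T N) ∈ T.map toELin :=
    (T.map toELin).starProjection_apply_mem (toELin N)
  exact toELin_injective hMN ▸ hM

theorem matProj_eq_self {T : Submodule ℝ (Matrix (Fin p) (Fin p) ℝ)} {N : Matrix (Fin p) (Fin p) ℝ}
    (hN : N ∈ T) : matProj T N = N :=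
  toELin_injective <| Submodule.starProjection_eq_self_iff.2 (Submodule.mem_map_of_mem hN)

def matProjₗ (T : Submodule ℝ (Matrix (Fin p) (Fin p) ℝ)) :
    Matrix (Fin p) (Fin p) ℝ →ₗ[ℝ] Matrix (Fin p) (Fin p) ℝ where
  toFun := matProj T
  map_add' M N := toELin_injective <| by simp only [toELin_matProj, map_add]
  map_smul' c M := toELin_injective <| by simp only [toELin_matProj, map_smul]; rfl

theorem rhoSub_bddAbove (T₁ T₂ : Submodule ℝ (Matrix (Fin p) (Fin p) ℝ)) :
    BddAbove (Set.range fun N : {N : Matrix (Fin p) (Fin p) ℝ // specNorm N ≤ 1} =>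
      specNorm (matProj T₁ N.1 - matProj T₂ N.1)) := by
  set D := LinearMap.toContinuousLinearMap (matProjₗ T₁ - matProjₗ T₂)
  refine ⟨‖D‖, ?_⟩
  rintro _ ⟨N, rfl⟩
  exact (D.le_opNorm N.1).trans (mul_le_of_le_one_right (norm_nonneg D) N.2)

theorem norm_matProj_sub_le_rhoSub (T₁ T₂ : Submodule ℝ (Matrix (Fin p) (Fin p) ℝ))
    {N : Matrix (Fin p) (Fin p) ℝ} (h1 : ‖N‖ ≤ 1) :
    ‖matProj T₁ N - matProj T₂ N‖ ≤ rhoSub T₁ T₂ :=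
  le_ciSup (rhoSub_bddAbove T₁ T₂) ⟨N, h1⟩

theorem rhoSub_nonneg (T₁ T₂ : Submodule ℝ (Matrix (Fin p) (Fin p) ℝ)) : 0 ≤ rhoSub T₁ T₂ :=
  Real.iSup_nonneg fun _ => norm_nonneg _

theorem maxNorm_le_of_mem_of_norm_le_one {T₁ T₂ : Submodule ℝ (Matrix (Fin p) (Fin p) ℝ)}
    {N : Matrix (Fin p) (Fin p) ℝ} (hN : N ∈ T₂) (h1 : ‖N‖ ≤ 1) :
    maxNorm N ≤ xiSub T₁ * (1 + rhoSub T₁ T₂) + rhoSub T₁ T₂ := by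
  set P := matProj T₁ N
  have hPN : ‖P - N‖ ≤ rhoSub T₁ T₂ := by
    simpa only [matProj_eq_self hN] using norm_matProj_sub_le_rhoSub T₁ T₂ h1
  have hP : ‖P‖ ≤ 1 + rhoSub T₁ T₂ :=
    (norm_le_norm_add_norm_sub' P N).trans (add_le_add h1 hPN)
  calc maxNorm N = maxNorm (P + (N - P)) := by rw [add_sub_cancel]
    _ ≤ maxNorm P + maxNorm (N - P) := maxNorm_add_le _ _
    _ ≤ xiSub T₁ * ‖P‖ + ‖P - N‖ := by
        rw [norm_sub_rev]
        gcongr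
        exacts [maxNorm_le_xiSub_mul_norm (matProj_mem T₁ N), maxNorm_le_norm _]
    _ ≤ xiSub T₁ * (1 + rhoSub T₁ T₂) + rhoSub T₁ T₂ := by
        have := xiSub_nonneg T₁
        gcongr

theorem xiSub_le_xiSub_mul_add_rhoSub (T₁ T₂ : Submodule ℝ (Matrix (Fin p) (Fin p) ℝ)) :
    xiSub T₂ ≤ xiSub T₁ * (1 + rhoSub T₁ T₂) + rhoSub T₁ T₂ :=
  Real.iSup_le (fun N => maxNorm_le_of_mem_of_norm_le_one N.2.1 N.2.2) <| by
    have := xiSub_nonneg T₁; have := rhoSub_nonneg T₁ T₂; positivity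

end LVGGM

theorem statement_3_general {p : ℕ} (T₁ T₂ : Submodule ℝ (Matrix (Fin p) (Fin p) ℝ))
    (hρ : LVGGM.rhoSub T₁ T₂ < 1) :
    LVGGM.xiSub T₂ ≤ (LVGGM.xiSub T₁ + LVGGM.rhoSub T₁ T₂) / (1 - LVGGM.rhoSub T₁ T₂) := by
  have hξ := LVGGM.xiSub_nonneg T₁
  have hρ₀ := LVGGM.rhoSub_nonneg T₁ T₂
  refine (LVGGM.xiSub_le_xiSub_mul_add_rhoSub T₁ T₂).trans ?_
  rw [le_div_iff₀ (sub_pos.2 hρ)]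
  nlinarith [mul_nonneg (mul_nonneg hξ hρ₀) hρ₀, mul_nonneg hρ₀ hρ₀]

/-- if `T₁, T₂` are subspaces of matrices of the same dimension with
`ρ(T₁,T₂) < 1`, then `ξ(T₂) ≤ (ξ(T₁)+ρ(T₁,T₂))/(1−ρ(T₁,T₂))`. -/
theorem statement_3 {p : ℕ} (T₁ T₂ : Submodule ℝ (Matrix (Fin p) (Fin p) ℝ))
    (hdim : Module.finrank ℝ T₁ = Module.finrank ℝ T₂)
    (hρ : LVGGM.rhoSub T₁ T₂ < 1) :
    LVGGM.xiSub T₂ ≤ (LVGGM.xiSub T₁ + LVGGM.rhoSub T₁ T₂) / (1 - LVGGM.rhoSub T₁ T₂) :=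
  statement_3_general T₁ T₂ hρ
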